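/- arXiv:0807.0900 — 5 statements merged into one kernel-verified Lean document; each statement's English description precedes it below -/
import Mathlib

section
/- Let Δ ⊂ ℝⁿ be a simple polytope written as the intersection of half-spaces {x : ⟨η_i, x⟩ ≤ κ_i} for i = 1,…,N, and let H be a linear functional on ℝⁿ. If the function κ ↦ ⟨H, c_Δ(κ)⟩ (where c_Δ(κ) is the center of mass of Δ(κ)) equals Σ_i β_i κ_i on the chamber of Δ, then H = Σ_i β_i η_i. -/
open MeasureTheory Function Set

noncomputable section

namespace MassLinearPaper

def dotp {n : ℕ} (v x : Fin n → ℝ) : ℝ := ∑ j, v j * x j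

def polytope {n N : ℕ} (η : Fin N → Fin n → ℝ) (κ : Fin N → ℝ) : Set (Fin n → ℝ) :=
  {x | ∀ i, dotp (η i) x ≤ κ i}

def facet {n N : ℕ} (η : Fin N → Fin n → ℝ) (κ : Fin N → ℝ) (i : Fin N) : Set (Fin n → ℝ) :=
  {x ∈ polytope η κ | dotp (η i) x = κ i}

/-- A polytope is simple if at each point the active conormals are linearly independent. -/
def IsSimplePoly {n N : ℕ} (η : Fin N → Fin n → ℝ) (κ : Fin N → ℝ) : Prop :=
  ∀ x ∈ polytope η κ,
    LinearIndependent ℝ (fun i : {i : Fin N // dotp (η i) x = κ i} => η i.1)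

/-- Two support vectors give analogous polytopes: the same collections of facets intersect. -/
def Analogous {n N : ℕ} (η : Fin N → Fin n → ℝ) (κ κ' : Fin N → ℝ) : Prop :=
  ∀ I : Finset (Fin N),
    (⋂ i ∈ I, facet η κ' i).Nonempty ↔ (⋂ i ∈ I, facet η κ i).Nonempty

/-- The chamber of Δ(κ). -/
def chamber {n N : ℕ} (η : Fin N → Fin n → ℝ) (κ : Fin N → ℝ) : Set (Fin N → ℝ) :=
  connectedComponentIn {κ' | IsSimplePoly η κ' ∧ Analogous η κ κ'} κ

/-- Standing hypotheses: simple, bounded, nonempty interior, all facets nonempty. -/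
def GoodPolytope {n N : ℕ} (η : Fin N → Fin n → ℝ) (κ : Fin N → ℝ) : Prop :=
  IsSimplePoly η κ ∧ Bornology.IsBounded (polytope η κ) ∧
    (interior (polytope η κ)).Nonempty ∧ ∀ i, (facet η κ i).Nonempty

/-- The center of mass of Δ(κ). -/
def centroid {n N : ℕ} (η : Fin N → Fin n → ℝ) (κ : Fin N → ℝ) : Fin n → ℝ :=
  ⨍ x in polytope η κ, x

/-- The volume of Δ(κ) as a function of κ. -/
def volFn {n N : ℕ} (η : Fin N → Fin n → ℝ) : (Fin N → ℝ) → ℝ :=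
  fun κ => (volume (polytope η κ)).toReal

/-- Partial derivative with respect to the i-th support number. -/
def pd {N : ℕ} (i : Fin N) (f : (Fin N → ℝ) → ℝ) : (Fin N → ℝ) → ℝ :=
  fun κ => fderiv ℝ f κ (Pi.single i 1)

def face {n N : ℕ} (η : Fin N → Fin n → ℝ) (κ : Fin N → ℝ) (S : Finset (Fin N)) :
    Set (Fin n → ℝ) :=
  ⋂ i ∈ S, facet η κ i

/-- Centroid of a face with respect to Hausdorff measure of the appropriate dimension. -/
def faceCentroid {n N : ℕ} (η : Fin N → Fin n → ℝ) (κ : Fin N → ℝ) (S : Finset (Fin N)) :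
    Fin n → ℝ :=
  ⨍ x in face η κ S, x ∂(μH[(n : ℝ) - S.card])

/-- The facet `F i` is H-symmetric: `⟨H, c(κ)⟩` does not depend on `κ i` on the chamber. -/
def SymmFacet {n N : ℕ} (η : Fin N → Fin n → ℝ) (κ : Fin N → ℝ) (H : Fin n → ℝ)
    (i : Fin N) : Prop :=
  ∀ κ₁ ∈ chamber η κ, ∀ κ₂ ∈ chamber η κ, (∀ j, j ≠ i → κ₁ j = κ₂ j) →
    dotp H (centroid η κ₁) = dotp H (centroid η κ₂)

/-- H is mass linear with coefficients γ and constant C. -/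
def MassLinear {n N : ℕ} (η : Fin N → Fin n → ℝ) (κ : Fin N → ℝ) (H : Fin n → ℝ)
    (γ : Fin N → ℝ) (C : ℝ) : Prop :=
  ∀ κ' ∈ chamber η κ, dotp H (centroid η κ') = ∑ i, γ i * κ' i + C

/-- A facet is pervasive if it meets every other facet. -/
def Pervasive {n N : ℕ} (η : Fin N → Fin n → ℝ) (κ : Fin N → ℝ) (i : Fin N) : Prop :=
  ∀ j, j ≠ i → (facet η κ i ∩ facet η κ j).Nonempty

/-- A facet is flat if the conormals of all other facets meeting it lie in a hyperplane. -/
def FlatFacet {n N : ℕ} (η : Fin N → Fin n → ℝ) (κ : Fin N → ℝ) (i : Fin N) : Prop :=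
  ∃ ξ : Fin n → ℝ, ξ ≠ 0 ∧
    ∀ j, j ≠ i → (facet η κ i ∩ facet η κ j).Nonempty → dotp (η j) ξ = 0

/-- Equivalence of facets, via the criterion of Lemma 4.4. -/
def FacetEquiv {n N : ℕ} (η : Fin N → Fin n → ℝ) (i j : Fin N) : Prop :=
  i = j ∨ ∃ ξ : Fin n → ℝ, dotp (η i) ξ = 1 ∧ dotp (η j) ξ = -1 ∧
    ∀ k, k ≠ i → k ≠ j → dotp (η k) ξ = 0

def IsEquivClass {n N : ℕ} (η : Fin N → Fin n → ℝ) (I : Finset (Fin N)) : Prop :=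
  I.Nonempty ∧ (∀ i ∈ I, ∀ j ∈ I, FacetEquiv η i j) ∧
    ∀ i ∈ I, ∀ j, FacetEquiv η i j → j ∈ I

/-- H is inessential. -/
def Inessential {n N : ℕ} (η : Fin N → Fin n → ℝ) (H : Fin n → ℝ) : Prop :=
  ∃ β : Fin N → ℝ, H = ∑ i, β i • η i ∧
    ∀ I : Finset (Fin N), IsEquivClass η I → ∑ i ∈ I, β i = 0

end MassLinearPaper

/-!
Translating `Δ(κ)` by `t ∈ ℝⁿ` replaces `κ_i` by `κ_i + ⟨η_i, t⟩`; these translates stay in the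
chamber (they lie on a line through `κ` of analogous simple polytopes) and their centroid is
`c_Δ(κ) + t`. Comparing the hypothesis at `κ` and at the translate gives
`⟨H, t⟩ = Σ_i β_i ⟨η_i, t⟩` for every `t`, i.e. `H = Σ_i β_i η_i`.
-/

open Matrix

theorem MeasureTheory.setAverage_id_preimage_sub_right {E : Type*} [NormedAddCommGroup E]
    [NormedSpace ℝ E] [CompleteSpace E] [MeasurableSpace E] [BorelSpace E]
    (μ : Measure E) [μ.IsAddRightInvariant] {s : Set E} (hs₀ : μ s ≠ 0) (hs : μ s ≠ ⊤)
    (hint : IntegrableOn (fun x => x) s μ) (t : E) :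
    ⨍ x in (· - t) ⁻¹' s, x ∂μ = (⨍ x in s, x ∂μ) + t := by
  have hmeas : μ ((· - t) ⁻¹' s) = μ s := by
    simpa only [sub_eq_add_neg] using measure_preimage_add_right μ (-t) s
  have hint' : ∫ x in (· - t) ⁻¹' s, x ∂μ = ∫ y in s, y + t ∂μ := by
    rw [← (measurePreserving_sub_right μ t).setIntegral_preimage_emb
      (MeasurableEquiv.subRight t).measurableEmbedding (fun y => y + t)]
    simp only [sub_add_cancel]
  rw [setAverage_eq, setAverage_eq, measureReal_def, measureReal_def, hmeas, hint',
    integral_add hint (integrableOn_const hs), setIntegral_const, measureReal_def, smul_add,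
    smul_smul, inv_mul_cancel₀ (ENNReal.toReal_ne_zero.2 ⟨hs₀, hs⟩), one_smul]

namespace MassLinearPaper

variable {n N : ℕ} (η : Fin N → Fin n → ℝ) (κ : Fin N → ℝ) (t : Fin n → ℝ)

theorem dotp_eq_dotProduct (v x : Fin n → ℝ) : dotp v x = v ⬝ᵥ x := rfl

theorem self_mem_chamber (h : IsSimplePoly η κ) : κ ∈ chamber η κ :=
  mem_connectedComponentIn ⟨h, fun _ => Iff.rfl⟩

theorem isClosed_polytope : IsClosed (polytope η κ) := by
  simp only [polytope, ofPred_forall, dotp_eq_dotProduct]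
  exact isClosed_iInter fun i => isClosed_le (by fun_prop) continuous_const

theorem dotp_sub_add_mulVec (i : Fin N) (x : Fin n → ℝ) :
    dotp (η i) x - (κ + of η *ᵥ t) i = dotp (η i) (x - t) - κ i := by
  rw [dotp_eq_dotProduct, dotp_eq_dotProduct, dotProduct_sub]
  change _ - (κ i + η i ⬝ᵥ t) = _
  ring

theorem polytope_add_mulVec : polytope η (κ + of η *ᵥ t) = (· - t) ⁻¹' polytope η κ := by
  ext x
  simp only [polytope, mem_preimage, mem_ofPred_eq, ← sub_nonpos (b := (κ + of η *ᵥ t) _),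
    dotp_sub_add_mulVec, sub_nonpos]

theorem facet_add_mulVec (i : Fin N) :
    facet η (κ + of η *ᵥ t) i = (· - t) ⁻¹' facet η κ i := by
  ext x
  simp only [facet, polytope_add_mulVec, mem_preimage, mem_ofPred_eq,
    ← sub_eq_zero (b := (κ + of η *ᵥ t) i), dotp_sub_add_mulVec, sub_eq_zero]

theorem isSimplePoly_add_mulVec (h : IsSimplePoly η κ) : IsSimplePoly η (κ + of η *ᵥ t) := by
  intro x hx
  rw [polytope_add_mulVec] at hx
  have hactive (i : Fin N) : dotp (η i) (x - t) = κ i ↔ dotp (η i) x = (κ + of η *ᵥ t) i := by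
    rw [← sub_eq_zero, ← dotp_sub_add_mulVec, sub_eq_zero]
  exact (linearIndependent_equiv (Equiv.subtypeEquivRight hactive)).mp (h (x - t) hx)

theorem analogous_add_mulVec : Analogous η κ (κ + of η *ᵥ t) := by
  intro I
  simp only [facet_add_mulVec, ← preimage_iInter₂]
  exact (Equiv.subRight t).surjective.nonempty_preimage

theorem add_mulVec_mem_chamber (h : IsSimplePoly η κ) : κ + of η *ᵥ t ∈ chamber η κ := by
  have hline : range (fun s : ℝ => κ + of η *ᵥ (s • t)) ⊆
      {κ' | IsSimplePoly η κ' ∧ Analogous η κ κ'} := by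
    rintro _ ⟨s, rfl⟩
    exact ⟨isSimplePoly_add_mulVec η κ _ h, analogous_add_mulVec η κ _⟩
  have hcont : Continuous fun s : ℝ => κ + of η *ᵥ (s • t) := by
    simp only [mulVec_smul]
    fun_prop
  refine (isPreconnected_range hcont).subset_connectedComponentIn ⟨0, ?_⟩ hline ⟨1, ?_⟩
  · simp
  · simp

theorem centroid_add_mulVec (hb : Bornology.IsBounded (polytope η κ))
    (hi : (interior (polytope η κ)).Nonempty) :
    centroid η (κ + of η *ᵥ t) = centroid η κ + t := by
  have hc : IsCompact (polytope η κ) :=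
    Metric.isCompact_of_isClosed_isBounded (isClosed_polytope η κ) hb
  rw [centroid, polytope_add_mulVec]
  exact setAverage_id_preimage_sub_right volume
    (Measure.measure_pos_of_nonempty_interior volume hi).ne' hc.measure_ne_top
    (continuous_id.continuousOn.integrableOn_compact hc) t

end MassLinearPaper

open MassLinearPaper

/-- If `κ ↦ ⟨H, c_Δ(κ)⟩` equals `Σ β_i κ_i` on the chamber, then `H = Σ β_i η_i`. -/
theorem stmt0 {n N : ℕ} (η : Fin N → Fin n → ℝ) (κ : Fin N → ℝ) (H : Fin n → ℝ)
    (β : Fin N → ℝ) (hΔ : GoodPolytope η κ)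
    (hlin : ∀ κ' ∈ chamber η κ, dotp H (centroid η κ') = ∑ i, β i * κ' i) :
    H = ∑ i, β i • η i := by
  obtain ⟨hsimple, hbdd, hint, -⟩ := hΔ
  have hdual (t : Fin n → ℝ) : H ⬝ᵥ t = (β ᵥ* of η) ⬝ᵥ t := by
    have h₀ := hlin κ (self_mem_chamber η κ hsimple)
    have h₁ := hlin _ (add_mulVec_mem_chamber η κ t hsimple)
    simp only [centroid_add_mulVec η κ t hbdd hint, dotp_eq_dotProduct, dotProduct_add] at h₀ h₁
    change _ = β ⬝ᵥ κ at h₀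
    change _ = β ⬝ᵥ (κ + of η *ᵥ t) at h₁
    rw [dotProduct_add, h₀, dotProduct_mulVec] at h₁
    exact add_left_cancel h₁
  ext j
  simpa [dotProduct_single_one, vecMul_eq_sum, Finset.sum_apply] using hdual (Pi.single j 1)
end
end

section
/- Let Δ ⊂ ℝⁿ be a simple polytope with conormals η_1,…,η_N, and let F_i, F_j be distinct facets. If there exists ξ ∈ ℝⁿ with ⟨η_i, ξ⟩ > 0 > ⟨η_j, ξ⟩ and ⟨η_k, ξ⟩ = 0 for all k ≠ i,j, then for every κ in the chamber C_Δ there exists an affine reflection a_κ of ℝⁿ with a_κ(Δ(κ)) = Δ(κ), exchanging the facets F_i and F_j and taking every other facet to itself, and whose linear part is independent of κ. -/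
open MeasureTheory Function Set

noncomputable section

open MassLinearPaper

lemma dotp_add' {n : ℕ} (v x y : Fin n → ℝ) : dotp v (x + y) = dotp v x + dotp v y := by
  simp [dotp, mul_add, Finset.sum_add_distrib]

lemma dotp_smul' {n : ℕ} (v : Fin n → ℝ) (r : ℝ) (x : Fin n → ℝ) :
    dotp v (r • x) = r * dotp v x := by
  simp [dotp, Finset.mul_sum, mul_left_comm]

lemma dotp_smul_left' {n : ℕ} (v x : Fin n → ℝ) (r : ℝ) :
    dotp (r • v) x = r * dotp v x := by
  simp [dotp, Finset.mul_sum, mul_assoc]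

lemma dotp_sub_left' {n : ℕ} (v w x : Fin n → ℝ) :
    dotp (v - w) x = dotp v x - dotp w x := by
  simp [dotp, sub_mul, Finset.sum_sub_distrib]

lemma image_of_invol {α : Type*} (T : α → α) (hT : ∀ x, T (T x) = x)
    (S S' : Set α) (h : ∀ x, T x ∈ S ↔ x ∈ S') : T '' S' = S := by
  ext y
  constructor
  · rintro ⟨x, hx, rfl⟩
    exact (h x).2 hx
  · intro hy
    exact ⟨T y, (h (T y)).1 (by rwa [hT]), hT y⟩

/-- If there is ξ with `⟨η_i,ξ⟩ > 0 > ⟨η_j,ξ⟩` and `⟨η_k,ξ⟩ = 0` otherwise, then there is a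
linear reflection which for every κ in the chamber gives an affine symmetry of Δ(κ)
exchanging F_i and F_j and fixing all other facets. -/
theorem stmt11 {n N : ℕ} (η : Fin N → Fin n → ℝ) (κ : Fin N → ℝ)
    (hΔ : GoodPolytope η κ) (i j : Fin N) (hij : i ≠ j)
    (ξ : Fin n → ℝ) (hi : 0 < dotp (η i) ξ) (hj : dotp (η j) ξ < 0)
    (hk : ∀ k, k ≠ i → k ≠ j → dotp (η k) ξ = 0) :
    ∃ L : (Fin n → ℝ) →ₗ[ℝ] (Fin n → ℝ),
      (∃ ζ : Fin n → ℝ, ζ ≠ 0 ∧ ∀ x, dotp ζ x = 0 → L x = x) ∧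
      (∀ x, L (L x) = x) ∧
      ∀ κ' ∈ chamber η κ, ∃ v : Fin n → ℝ,
        ((fun x => L x + v) '' polytope η κ' = polytope η κ') ∧
        ((fun x => L x + v) '' facet η κ' i = facet η κ' j) ∧
        ((fun x => L x + v) '' facet η κ' j = facet η κ' i) ∧
        ∀ k, k ≠ i → k ≠ j → (fun x => L x + v) '' facet η κ' k = facet η κ' k := by
  set a := dotp (η i) ξ with ha_def
  have ha : 0 < a := hi
  set b := -(dotp (η j) ξ) with hb_def
  have hb : 0 < b := by simpa [hb_def] using hj
  have ha0 : a ≠ 0 := ne_of_gt ha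
  have hb0 : b ≠ 0 := ne_of_gt hb
  have hηjξ : dotp (η j) ξ = -b := by rw [hb_def]; ring
  let f : (Fin n → ℝ) →ₗ[ℝ] ℝ :=
    { toFun := fun x => dotp (η j) x / b - dotp (η i) x / a
      map_add' := by intro x y; rw [dotp_add', dotp_add']; ring
      map_smul' := by intro r x; rw [dotp_smul', dotp_smul']; simp only [RingHom.id_apply, smul_eq_mul]; ring }
  have hf : ∀ x, f x = dotp (η j) x / b - dotp (η i) x / a := fun x => rfl
  have hfξ : f ξ = -2 := by
    rw [hf, hηjξ, ← ha_def]
    field_simp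
    norm_num
  let L : (Fin n → ℝ) →ₗ[ℝ] (Fin n → ℝ) := LinearMap.id + f.smulRight ξ
  have hLx : ∀ x, L x = x + f x • ξ := fun x => rfl
  have hinv : ∀ x, L (L x) = x := by
    intro x
    have h1 : f (L x) = - f x := by
      rw [hLx, map_add, _root_.map_smul, hfξ]
      simp; ring
    rw [hLx (L x), h1, hLx x, add_assoc, ← add_smul]
    simp
  refine ⟨L, ⟨b⁻¹ • η j - a⁻¹ • η i, ?_, ?_⟩, hinv, ?_⟩
  · intro h
    have h2 : dotp (b⁻¹ • η j - a⁻¹ • η i) ξ = -2 := by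
      rw [dotp_sub_left', dotp_smul_left', dotp_smul_left', hηjξ, ← ha_def]
      field_simp
      norm_num
    rw [h] at h2
    simp [dotp] at h2
  · intro x hx
    have h2 : f x = 0 := by
      rw [dotp_sub_left', dotp_smul_left', dotp_smul_left'] at hx
      rw [hf, div_eq_inv_mul, div_eq_inv_mul]
      linarith
    rw [hLx, h2]
    simp
  · intro κ' _
    set t : ℝ := κ' i / a - κ' j / b with ht_def
    have key : ∀ (x : Fin n → ℝ) (k : Fin N),
        dotp (η k) (L x + t • ξ) = dotp (η k) x + (f x + t) * dotp (η k) ξ := by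
      intro x k
      rw [hLx, add_assoc, dotp_add', dotp_add', dotp_smul', dotp_smul']
      ring
    have h_i : ∀ x, dotp (η i) (L x + t • ξ) =
        (a / b) * (dotp (η j) x - κ' j) + κ' i := by
      intro x
      rw [key, hf, ← ha_def, ht_def]
      field_simp
      ring
    have h_j : ∀ x, dotp (η j) (L x + t • ξ) =
        (b / a) * (dotp (η i) x - κ' i) + κ' j := by
      intro x
      rw [key, hf, hηjξ, ht_def]
      field_simp
      ring
    have h_k : ∀ k, k ≠ i → k ≠ j → ∀ x,
        dotp (η k) (L x + t • ξ) = dotp (η k) x := by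
      intro k hki hkj x
      rw [key, hk k hki hkj]
      ring
    have hab : 0 < a / b := div_pos ha hb
    have hba : 0 < b / a := div_pos hb ha
    have hiff_i : ∀ x, dotp (η i) (L x + t • ξ) ≤ κ' i ↔ dotp (η j) x ≤ κ' j := by
      intro x
      rw [h_i]
      constructor
      · intro h
        nlinarith
      · intro h
        nlinarith
    have hiff_j : ∀ x, dotp (η j) (L x + t • ξ) ≤ κ' j ↔ dotp (η i) x ≤ κ' i := by
      intro x
      rw [h_j]
      constructor
      · intro h
        nlinarith
      · intro h
        nlinarith
    have heq_i : ∀ x, dotp (η i) (L x + t • ξ) = κ' i ↔ dotp (η j) x = κ' j := by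
      intro x
      rw [h_i]
      constructor
      · intro h
        have h2 : (a / b) * (dotp (η j) x - κ' j) = 0 := by linarith
        rcases mul_eq_zero.1 h2 with h3 | h3
        · exact absurd h3 (ne_of_gt hab)
        · linarith
      · intro h
        rw [h]
        ring
    have heq_j : ∀ x, dotp (η j) (L x + t • ξ) = κ' j ↔ dotp (η i) x = κ' i := by
      intro x
      rw [h_j]
      constructor
      · intro h
        have h2 : (b / a) * (dotp (η i) x - κ' i) = 0 := by linarith
        rcases mul_eq_zero.1 h2 with h3 | h3
        · exact absurd h3 (ne_of_gt hba)
        · linarith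
      · intro h
        rw [h]
        ring
    have hP : ∀ x, (L x + t • ξ) ∈ polytope η κ' ↔ x ∈ polytope η κ' := by
      intro x
      constructor
      · intro h k
        rcases eq_or_ne k i with rfl | hki
        · exact (hiff_j x).1 (h j)
        rcases eq_or_ne k j with rfl | hkj
        · exact (hiff_i x).1 (h i)
        · have := h k
          rwa [h_k k hki hkj x] at this
      · intro h k
        rcases eq_or_ne k i with rfl | hki
        · exact (hiff_i x).2 (h j)
        rcases eq_or_ne k j with rfl | hkj
        · exact (hiff_j x).2 (h i)
        · rw [h_k k hki hkj x]
          exact h k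
    have hTT' : ∀ x, (fun y => L y + t • ξ) ((fun y => L y + t • ξ) x) = x := by
      intro x
      have hLξ : L ξ = -ξ := by
        rw [hLx, hfξ]
        ext m
        simp
        ring
      show L (L x + t • ξ) + t • ξ = x
      rw [map_add, _root_.map_smul, hinv, hLξ, smul_neg]
      abel
    refine ⟨t • ξ, ?_, ?_, ?_, ?_⟩
    · exact image_of_invol _ hTT' _ _ hP
    · exact image_of_invol _ hTT' _ _ (fun x =>
        ⟨fun h => ⟨(hP x).1 h.1, (heq_j x).1 h.2⟩, fun h => ⟨(hP x).2 h.1, (heq_j x).2 h.2⟩⟩)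
    · exact image_of_invol _ hTT' _ _ (fun x =>
        ⟨fun h => ⟨(hP x).1 h.1, (heq_i x).1 h.2⟩, fun h => ⟨(hP x).2 h.1, (heq_i x).2 h.2⟩⟩)
    · intro k hki hkj
      exact image_of_invol _ hTT' _ _ (fun x =>
        ⟨fun h => ⟨(hP x).1 h.1, by rw [← h_k k hki hkj x]; exact h.2⟩,
         fun h => ⟨(hP x).2 h.1, by rw [h_k k hki hkj x]; exact h.2⟩⟩)
end
end

section
/- Let Δ ⊂ ℝⁿ be a simple polytope, F_1 and F_2 two flat facets with F_1 ∩ F_2 = ∅. Then Δ is a bundle over the 1-simplex Δ_1 with base facets F_1 and F_2; in particular, Δ is combinatorially equivalent to F_1 × Δ_1, the conormal η_2 is a negative multiple of η_1 modulo the span of the conormals of the remaining facets, and every other conormal η_k lies in a common hyperplane annihilated by a vector ξ with ⟨η_1, ξ⟩ = 1. -/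
open MeasureTheory Function Set

noncomputable section

open MassLinearPaper

namespace MassLinearPaper

lemma dotp_add_smul {n : ℕ} (v x y : Fin n → ℝ) (c : ℝ) :
    dotp v (x + c • y) = dotp v x + c * dotp v y := by
  simp only [dotp, Pi.add_apply, Pi.smul_apply, smul_eq_mul, mul_add, Finset.sum_add_distrib,
    Finset.mul_sum]
  congr 1
  exact Finset.sum_congr rfl fun j _ => by ring

lemma dotp_smul_right {n : ℕ} (v x : Fin n → ℝ) (c : ℝ) :
    dotp v (c • x) = c * dotp v x := by
  have := dotp_add_smul v 0 x c
  simpa [dotp] using this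

lemma dotp_sub_right {n : ℕ} (v x y : Fin n → ℝ) :
    dotp v (x - y) = dotp v x - dotp v y := by
  simp only [dotp, Pi.sub_apply, mul_sub, Finset.sum_sub_distrib]

lemma dotp_zero_right {n : ℕ} (v : Fin n → ℝ) : dotp v (0 : Fin n → ℝ) = 0 := by
  simp [dotp]

lemma dotp_affine {n : ℕ} (v x y : Fin n → ℝ) (s : ℝ) :
    dotp v (x + s • (y - x)) = dotp v x + s * (dotp v y - dotp v x) := by
  rw [dotp_add_smul, dotp_sub_right]

lemma dotp_sub_smul_left {n : ℕ} (x y z : Fin n → ℝ) (c : ℝ) :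
    dotp (x - c • y) z = dotp x z - c * dotp y z := by
  simp only [dotp, Pi.sub_apply, Pi.smul_apply, smul_eq_mul, sub_mul, mul_assoc,
    Finset.sum_sub_distrib, Finset.mul_sum]

lemma continuous_dotp {n : ℕ} (v : Fin n → ℝ) : Continuous fun x : Fin n → ℝ => dotp v x := by
  unfold dotp
  exact continuous_finset_sum _ fun j _ => continuous_const.mul (continuous_apply j)

lemma ray_lemma {n N : ℕ} {η : Fin N → Fin n → ℝ} {κ : Fin N → ℝ}
    (hb : Bornology.IsBounded (polytope η κ)) {x : Fin n → ℝ} (hx : x ∈ polytope η κ)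
    {v : Fin n → ℝ} (hv : ∀ i, dotp (η i) v ≤ 0) : v = 0 := by
  by_contra h0
  obtain ⟨M, hM⟩ := isBounded_iff_forall_norm_le.mp hb
  have hMx : ‖x‖ ≤ M := hM x hx
  have hvpos : (0:ℝ) < ‖v‖ := norm_pos_iff.mpr h0
  set t : ℝ := (M + ‖x‖ + 1) / ‖v‖ with ht
  have ht0 : 0 ≤ t := by
    apply div_nonneg _ (le_of_lt hvpos)
    have : (0:ℝ) ≤ ‖x‖ := norm_nonneg _
    linarith
  have hmem : x + t • v ∈ polytope η κ := by
    intro i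
    have := hv i
    have h1 : dotp (η i) (x + t • v) = dotp (η i) x + t * dotp (η i) v := dotp_add_smul _ _ _ _
    have h2 := hx i
    nlinarith
  have hnorm : ‖x + t • v‖ ≤ M := hM _ hmem
  have h3 : ‖t • v‖ ≤ ‖x + t • v‖ + ‖x‖ := by
    have := norm_add_le (x + t • v) (-x)
    simpa using this
  have h4 : ‖t • v‖ = M + ‖x‖ + 1 := by
    rw [norm_smul, Real.norm_eq_abs, abs_of_nonneg ht0, ht, div_mul_cancel₀]
    exact ne_of_gt hvpos
  linarith

/-- If `ξ` is a nonzero flat vector for facet `i`, then `⟨η i, ξ⟩ ≠ 0`. -/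
lemma nondeg {n N : ℕ} {η : Fin N → Fin n → ℝ} {κ : Fin N → ℝ} {i : Fin N} {ξ : Fin n → ℝ}
    (hb : Bornology.IsBounded (polytope η κ)) (hne : ξ ≠ 0)
    {x : Fin n → ℝ} (hx : x ∈ facet η κ i)
    (hperp : ∀ j, j ≠ i → (facet η κ i ∩ facet η κ j).Nonempty → dotp (η j) ξ = 0) :
    dotp (η i) ξ ≠ 0 := by
  intro h0
  obtain ⟨hxp, hxe⟩ := hx
  -- the set of conormals pairing positively with ξ
  set K := Finset.univ.filter (fun k => 0 < dotp (η k) ξ) with hK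
  have hKne : K.Nonempty := by
    by_contra hKe
    rw [Finset.not_nonempty_iff_eq_empty] at hKe
    have hall : ∀ k, dotp (η k) ξ ≤ 0 := by
      intro k
      by_contra hk
      have : k ∈ K := by simp [hK]; linarith
      simp [hKe] at this
    exact hne (ray_lemma hb hxp hall)
  obtain ⟨k₀, hk₀K, hk₀min⟩ := K.exists_min_image
    (fun k => (κ k - dotp (η k) x) / dotp (η k) ξ) hKne
  have hk₀pos : 0 < dotp (η k₀) ξ := by
    simpa [hK] using hk₀K
  set t := (κ k₀ - dotp (η k₀) x) / dotp (η k₀) ξ with htdef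
  have ht0 : 0 ≤ t := div_nonneg (by linarith [hxp k₀]) (le_of_lt hk₀pos)
  set y := x + t • ξ with hy
  have hyval : ∀ j, dotp (η j) y = dotp (η j) x + t * dotp (η j) ξ := fun j => dotp_add_smul _ _ _ _
  have hyp : y ∈ polytope η κ := by
    intro j
    rw [hyval j]
    by_cases hjK : j ∈ K
    · have hjpos : 0 < dotp (η j) ξ := by simpa [hK] using hjK
      have h1 := hk₀min j hjK
      have h2 : t * dotp (η j) ξ ≤ κ j - dotp (η j) x := (le_div_iff₀ hjpos).mp h1
      linarith
    · have hjnp : dotp (η j) ξ ≤ 0 := by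
        by_contra hj
        exact hjK (by simp [hK]; linarith)
      nlinarith [hxp j]
  have hyi : y ∈ facet η κ i := ⟨hyp, by rw [hyval i, h0]; simpa using hxe⟩
  have hyk : y ∈ facet η κ k₀ := by
    refine ⟨hyp, ?_⟩
    rw [hyval k₀, htdef, div_mul_cancel₀ _ (ne_of_gt hk₀pos)]
    ring
  have hk₀i : k₀ ≠ i := by
    intro h
    rw [h] at hk₀pos
    rw [h0] at hk₀pos
    exact lt_irrefl _ hk₀pos
  have := hperp k₀ hk₀i ⟨y, hyi, hyk⟩
  rw [this] at hk₀pos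
  exact lt_irrefl _ hk₀pos

/-- Prism inequality: with a normalized flat vector for a nonempty facet `i`,
pushing any point of the polytope to the hyperplane of `i` stays in the polytope. -/
lemma prism {n N : ℕ} {η : Fin N → Fin n → ℝ} {κ : Fin N → ℝ} {i : Fin N} {ξ : Fin n → ℝ}
    (hx₀ : (facet η κ i).Nonempty)
    (hnorm : dotp (η i) ξ = 1)
    (hperp : ∀ j, j ≠ i → (facet η κ i ∩ facet η κ j).Nonempty → dotp (η j) ξ = 0) :
    ∀ x ∈ polytope η κ, ∀ j,
      dotp (η j) x + (κ i - dotp (η i) x) * dotp (η j) ξ ≤ κ j := by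
  by_contra hcon
  push_neg at hcon
  obtain ⟨x₁, hx₁, j₀, hj₀⟩ := hcon
  obtain ⟨x₀, hx₀p, hx₀e⟩ := hx₀
  set F : Fin N → (Fin n → ℝ) → ℝ :=
    fun j x => dotp (η j) x + (κ i - dotp (η i) x) * dotp (η j) ξ - κ j with hF
  set A : Fin N → ℝ := fun j => F j x₀ with hA
  set B : Fin N → ℝ := fun j => F j x₁ with hB
  have hAle : ∀ j, A j ≤ 0 := by
    intro j
    have : κ i - dotp (η i) x₀ = 0 := by rw [hx₀e]; ring
    simp only [hA, hF, this, zero_mul, add_zero]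
    linarith [hx₀p j]
  have hBi : B i = 0 := by
    simp only [hB, hF, hnorm]
    ring
  set V := Finset.univ.filter (fun j => 0 < B j) with hV
  have hj₀V : j₀ ∈ V := by
    simp only [hV, Finset.mem_filter, Finset.mem_univ, true_and, hB, hF]
    linarith
  obtain ⟨jm, hjmV, hjmmin⟩ := V.exists_min_image (fun j => A j / (A j - B j)) ⟨j₀, hj₀V⟩
  have hBjm : 0 < B jm := by simpa [hV] using hjmV
  have hden : A jm - B jm < 0 := by linarith [hAle jm]
  set s := A jm / (A jm - B jm) with hs
  have hs0 : 0 ≤ s := by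
    rw [hs, div_nonneg_iff]
    right
    exact ⟨hAle jm, le_of_lt hden⟩
  have hs1 : s < 1 := by
    rw [hs, div_lt_one_iff]
    right; right
    exact ⟨hden, by linarith⟩
  set xs := x₀ + s • (x₁ - x₀) with hxs
  have hFaff : ∀ j, F j xs = A j + s * (B j - A j) := by
    intro j
    simp only [hF, hxs, hA, hB, dotp_affine]
    ring
  have hxsp : xs ∈ polytope η κ := by
    intro j
    rw [hxs, dotp_affine]
    have h1 := hx₀p j
    have h2 := hx₁ j
    nlinarith
  have hFle : ∀ j, F j xs ≤ 0 := by
    intro j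
    rw [hFaff j]
    by_cases hjV : j ∈ V
    · have hBj : 0 < B j := by simpa [hV] using hjV
      have hdenj : A j - B j < 0 := by linarith [hAle j]
      have hsle : s ≤ A j / (A j - B j) := hjmmin j hjV
      have h2 : A j ≤ s * (A j - B j) := by
        rw [le_div_iff_of_neg hdenj] at hsle
        linarith
      nlinarith [h2]
    · have hBj : B j ≤ 0 := by
        by_contra h
        exact hjV (by simp [hV]; linarith)
      nlinarith [hAle j]
  have hFeq : F jm xs = 0 := by
    have hne' : A jm - B jm ≠ 0 := ne_of_lt hden
    rw [hFaff jm, hs]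
    field_simp
    ring
  set z := xs + (κ i - dotp (η i) xs) • ξ with hz
  have hzval : ∀ j, dotp (η j) z = F j xs + κ j := by
    intro j
    rw [hz, dotp_add_smul, hF]
    ring
  have hzp : z ∈ polytope η κ := by
    intro j
    rw [hzval j]
    linarith [hFle j]
  have hzi : z ∈ facet η κ i := by
    refine ⟨hzp, ?_⟩
    rw [hz, dotp_add_smul, hnorm]
    ring
  have hzjm : z ∈ facet η κ jm := ⟨hzp, by rw [hzval jm, hFeq]; ring⟩
  have hjmi : jm ≠ i := by
    intro h
    rw [h, hBi] at hBjm
    exact lt_irrefl _ hBjm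
  have hzero := hperp jm hjmi ⟨z, hzi, hzjm⟩
  have : B jm ≤ 0 := by
    simp only [hB, hF, hzero, mul_zero, add_zero]
    linarith [hx₁ jm]
  linarith


/-- Pushing a point to the hyperplane of facet `i` lands in the facet. -/
lemma prism_mem {n N : ℕ} {η : Fin N → Fin n → ℝ} {κ : Fin N → ℝ} {i : Fin N} {ξ : Fin n → ℝ}
    (hx₀ : (facet η κ i).Nonempty)
    (hnorm : dotp (η i) ξ = 1)
    (hperp : ∀ j, j ≠ i → (facet η κ i ∩ facet η κ j).Nonempty → dotp (η j) ξ = 0)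
    {x : Fin n → ℝ} (hx : x ∈ polytope η κ) :
    x + (κ i - dotp (η i) x) • ξ ∈ facet η κ i := by
  constructor
  · intro j
    rw [dotp_add_smul]
    exact prism hx₀ hnorm hperp x hx j
  · rw [dotp_add_smul, hnorm]
    ring

/-- Every conormal other than `η i` pairs nonpositively with the normalized flat vector. -/
lemma pair_nonpos {n N : ℕ} {η : Fin N → Fin n → ℝ} {κ : Fin N → ℝ} {i : Fin N} {ξ : Fin n → ℝ}
    (hx₀ : (facet η κ i).Nonempty)
    (hnorm : dotp (η i) ξ = 1)
    (hperp : ∀ j, j ≠ i → (facet η κ i ∩ facet η κ j).Nonempty → dotp (η j) ξ = 0)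
    (hfacets : ∀ j, (facet η κ j).Nonempty) :
    ∀ j, j ≠ i → dotp (η j) ξ ≤ 0 := by
  intro j hj
  by_contra hpos
  push_neg at hpos
  obtain ⟨x, hxp, hxe⟩ := hfacets j
  have h1 := prism hx₀ hnorm hperp x hxp j
  rw [hxe] at h1
  have hg : κ i - dotp (η i) x ≤ 0 := by nlinarith
  have hg' : dotp (η i) x ≤ κ i := hxp i
  have : dotp (η i) x = κ i := le_antisymm hg' (by linarith)
  have := hperp j hj ⟨x, ⟨hxp, this⟩, ⟨hxp, hxe⟩⟩
  linarith

/-- The conormal of a nonempty facet disjoint from facet `i` pairs negatively. -/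
lemma pair_neg {n N : ℕ} {η : Fin N → Fin n → ℝ} {κ : Fin N → ℝ} {i i' : Fin N} {ξ : Fin n → ℝ}
    (hx₀ : (facet η κ i).Nonempty)
    (hnorm : dotp (η i) ξ = 1)
    (hperp : ∀ j, j ≠ i → (facet η κ i ∩ facet η κ j).Nonempty → dotp (η j) ξ = 0)
    (hfacets : ∀ j, (facet η κ j).Nonempty)
    (hii' : i' ≠ i) (hdisj : facet η κ i ∩ facet η κ i' = ∅) :
    dotp (η i') ξ < 0 := by
  have hle := pair_nonpos hx₀ hnorm hperp hfacets i' hii'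
  rcases lt_or_eq_of_le hle with h | h
  · exact h
  · exfalso
    obtain ⟨x, hxp, hxe⟩ := hfacets i'
    set z := x + (κ i - dotp (η i) x) • ξ with hz
    have hzi : z ∈ facet η κ i := prism_mem hx₀ hnorm hperp hxp
    have hzi' : z ∈ facet η κ i' := by
      refine ⟨hzi.1, ?_⟩
      rw [hz, dotp_add_smul, h, hxe]
      ring
    have : z ∈ facet η κ i ∩ facet η κ i' := ⟨hzi, hzi'⟩
    rw [hdisj] at this
    exact this


lemma dotp_add_left {n : ℕ} (x y z : Fin n → ℝ) :
    dotp (x + y) z = dotp x z + dotp y z := by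
  simp [dotp, add_mul, Finset.sum_add_distrib]

lemma dotp_smul_left {n : ℕ} (x z : Fin n → ℝ) (c : ℝ) :
    dotp (c • x) z = c * dotp x z := by
  simp [dotp, Finset.mul_sum, mul_assoc]

end MassLinearPaper

/-- Two disjoint flat facets make Δ a bundle over the 1-simplex: there is ξ with
`⟨η_{i₁},ξ⟩ = 1`, `⟨η_{i₂},ξ⟩ < 0`, annihilating every other conormal; η_{i₂} is a negative
multiple of η_{i₁} modulo the span of the remaining conormals; and Δ is combinatorially
equivalent to F_{i₁} × Δ_1 (every nonempty face avoiding i₁, i₂ meets both facets). -/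
theorem stmt14 {n N : ℕ} (η : Fin N → Fin n → ℝ) (κ : Fin N → ℝ)
    (hΔ : GoodPolytope η κ) (i₁ i₂ : Fin N) (hne : i₁ ≠ i₂)
    (h1 : FlatFacet η κ i₁) (h2 : FlatFacet η κ i₂)
    (hdisj : facet η κ i₁ ∩ facet η κ i₂ = ∅) :
    ∃ ξ : Fin n → ℝ, dotp (η i₁) ξ = 1 ∧ dotp (η i₂) ξ < 0 ∧
      (∀ k, k ≠ i₁ → k ≠ i₂ → dotp (η k) ξ = 0) ∧
      (∃ c : ℝ, c < 0 ∧
        η i₂ - c • η i₁ ∈ Submodule.span ℝ (η '' {k | k ≠ i₁ ∧ k ≠ i₂})) ∧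
      (∀ J : Finset (Fin N), i₁ ∉ J → i₂ ∉ J → (⋂ j ∈ J, facet η κ j).Nonempty →
        ((facet η κ i₁ ∩ ⋂ j ∈ J, facet η κ j).Nonempty ∧
          (facet η κ i₂ ∩ ⋂ j ∈ J, facet η κ j).Nonempty)) := by
  obtain ⟨hsimple, hbound, hint, hfacets⟩ := hΔ
  obtain ⟨ξ₁', hξ₁ne, hperp₁'⟩ := h1
  obtain ⟨ξ₂', hξ₂ne, hperp₂'⟩ := h2
  obtain ⟨w₁, hw₁⟩ := hfacets i₁
  obtain ⟨w₂, hw₂⟩ := hfacets i₂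
  have hd₁ : dotp (η i₁) ξ₁' ≠ 0 := nondeg hbound hξ₁ne hw₁ hperp₁'
  have hd₂ : dotp (η i₂) ξ₂' ≠ 0 := nondeg hbound hξ₂ne hw₂ hperp₂'
  set ξ := (dotp (η i₁) ξ₁')⁻¹ • ξ₁' with hξdef
  set ξ₂ := (dotp (η i₂) ξ₂')⁻¹ • ξ₂' with hξ₂def
  have hnorm₁ : dotp (η i₁) ξ = 1 := by
    rw [hξdef, dotp_smul_right]
    field_simp
  have hnorm₂ : dotp (η i₂) ξ₂ = 1 := by
    rw [hξ₂def, dotp_smul_right]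
    field_simp
  have hperp₁ : ∀ j, j ≠ i₁ → (facet η κ i₁ ∩ facet η κ j).Nonempty → dotp (η j) ξ = 0 := by
    intro j hj hme
    rw [hξdef, dotp_smul_right, hperp₁' j hj hme, mul_zero]
  have hperp₂ : ∀ j, j ≠ i₂ → (facet η κ i₂ ∩ facet η κ j).Nonempty → dotp (η j) ξ₂ = 0 := by
    intro j hj hme
    rw [hξ₂def, dotp_smul_right, hperp₂' j hj hme, mul_zero]
  have hne₁ : (facet η κ i₁).Nonempty := ⟨w₁, hw₁⟩
  have hne₂ : (facet η κ i₂).Nonempty := ⟨w₂, hw₂⟩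
  have hdisj' : facet η κ i₂ ∩ facet η κ i₁ = ∅ := by rw [Set.inter_comm]; exact hdisj
  have hle₁ : ∀ j, j ≠ i₁ → dotp (η j) ξ ≤ 0 := pair_nonpos hne₁ hnorm₁ hperp₁ hfacets
  have hle₂ : ∀ j, j ≠ i₂ → dotp (η j) ξ₂ ≤ 0 := pair_nonpos hne₂ hnorm₂ hperp₂ hfacets
  have hneg₂ : dotp (η i₂) ξ < 0 :=
    pair_neg hne₁ hnorm₁ hperp₁ hfacets (Ne.symm hne) hdisj
  have hneg₁ : dotp (η i₁) ξ₂ < 0 :=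
    pair_neg hne₂ hnorm₂ hperp₂ hfacets hne hdisj'
  set a := -dotp (η i₂) ξ with ha
  set b := -dotp (η i₁) ξ₂ with hb
  have ha0 : 0 < a := by rw [ha]; linarith
  -- compactness of facet i₁ and the minimum of the distance to the hyperplane of i₂
  have hfsub : facet η κ i₁ ⊆ polytope η κ := fun x hx => hx.1
  have hclosed : IsClosed (facet η κ i₁) := by
    have hpc : IsClosed (polytope η κ) := by
      have : polytope η κ = ⋂ j, {x | dotp (η j) x ≤ κ j} := by
        ext x
        simp [polytope, Set.mem_iInter]
      rw [this]
      exact isClosed_iInter fun j => isClosed_le (continuous_dotp _) continuous_const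
    have h2c : IsClosed {x : Fin n → ℝ | dotp (η i₁) x = κ i₁} :=
      isClosed_eq (continuous_dotp _) continuous_const
    exact hpc.inter h2c
  have hcompact : IsCompact (facet η κ i₁) :=
    Metric.isCompact_of_isClosed_isBounded hclosed (hbound.subset hfsub)
  obtain ⟨xm, hxm, hxmmin⟩ := hcompact.exists_isMinOn
    (f := fun x => κ i₂ - dotp (η i₂) x) hne₁
    ((continuous_const.sub (continuous_dotp (η i₂))).continuousOn)
  set G := κ i₂ - dotp (η i₂) xm with hG
  have hGnonneg : 0 ≤ G := by
    have := hxm.1 i₂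
    rw [hG]
    linarith
  have hGpos : 0 < G := by
    rcases eq_or_lt_of_le hGnonneg with h | h
    · exfalso
      have hxm2 : xm ∈ facet η κ i₂ := ⟨hxm.1, by rw [hG] at h; linarith⟩
      have : xm ∈ facet η κ i₁ ∩ facet η κ i₂ := ⟨hxm, hxm2⟩
      rw [hdisj] at this
      exact this
    · exact h
  set y := xm + G • ξ₂ with hy
  have hyf : y ∈ facet η κ i₂ := by
    rw [hy, hG]
    exact prism_mem hne₂ hnorm₂ hperp₂ hxm.1
  have hg1y : κ i₁ - dotp (η i₁) y = G * b := by
    rw [hy, dotp_add_smul, hxm.2, hb]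
    ring
  set z := y + (κ i₁ - dotp (η i₁) y) • ξ with hz
  have hzf : z ∈ facet η κ i₁ := prism_mem hne₁ hnorm₁ hperp₁ hyf.1
  have hg2z : κ i₂ - dotp (η i₂) z = a * (G * b) := by
    rw [hz, dotp_add_smul, hyf.2, hg1y, ha]
    ring
  have hab : 1 ≤ a * b := by
    have hmin : κ i₂ - dotp (η i₂) xm ≤ κ i₂ - dotp (η i₂) z := hxmmin hzf
    rw [← hG, hg2z] at hmin
    nlinarith
  -- the two flat vectors are antiparallel
  set v := ξ + a • ξ₂ with hv
  have hv0 : v = 0 := by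
    refine ray_lemma hbound hw₁.1 ?_
    intro j
    rw [hv, dotp_add_smul]
    by_cases hj1 : j = i₁
    · rw [hj1, hnorm₁]
      have : dotp (η i₁) ξ₂ = -b := by rw [hb]; ring
      rw [this]
      nlinarith
    · by_cases hj2 : j = i₂
      · rw [hj2, hnorm₂]
        have : dotp (η i₂) ξ = -a := by rw [ha]; ring
        rw [this]
        ring_nf
        exact le_refl 0
      · have l1 := hle₁ j hj1
        have l2 := hle₂ j hj2
        nlinarith
  have hzero : ∀ k, k ≠ i₁ → k ≠ i₂ → dotp (η k) ξ = 0 ∧ dotp (η k) ξ₂ = 0 := by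
    intro k hk1 hk2
    have h0 : dotp (η k) ξ + a * dotp (η k) ξ₂ = 0 := by
      have hcomb := dotp_add_smul (η k) ξ ξ₂ a
      rw [← hv, hv0, dotp_zero_right] at hcomb
      linarith
    have l1 := hle₁ k hk1
    have l2 := hle₂ k hk2
    constructor <;> nlinarith
  refine ⟨ξ, hnorm₁, hneg₂, fun k hk1 hk2 => (hzero k hk1 hk2).1, ?_, ?_⟩
  · -- η i₂ is a negative multiple of η i₁ modulo the remaining conormals
    refine ⟨dotp (η i₂) ξ, hneg₂, ?_⟩
    set c := dotp (η i₂) ξ with hc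
    set u := η i₂ - c • η i₁ with hu
    set W := Submodule.span ℝ (η '' {k | k ≠ i₁ ∧ k ≠ i₂}) with hW
    by_contra huW
    set L : (Fin n → ℝ) →ₗ[ℝ] ℝ :=
      { toFun := fun w => dotp w ξ
        map_add' := fun x y => dotp_add_left x y ξ
        map_smul' := fun t x => by simpa using dotp_smul_left x ξ t } with hL
    have hWker : W ≤ LinearMap.ker L := by
      rw [hW, Submodule.span_le]
      rintro _ ⟨k, ⟨hk1, hk2⟩, rfl⟩
      exact LinearMap.mem_ker.mpr ((hzero k hk1 hk2).1)
    have hWξ : ∀ w ∈ W, dotp w ξ = 0 := fun w hw => LinearMap.mem_ker.mp (hWker hw)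
    set M := W ⊔ Submodule.span ℝ {η i₁} with hM
    have huM : u ∉ M := by
      intro hm
      rw [hM, Submodule.mem_sup] at hm
      obtain ⟨p, hp, q, hq, hpq⟩ := hm
      rw [Submodule.mem_span_singleton] at hq
      obtain ⟨t, rfl⟩ := hq
      have h1 : dotp u ξ = 0 := by
        rw [hu, dotp_sub_smul_left, hnorm₁, hc]
        ring
      rw [← hpq, dotp_add_left, dotp_smul_left, hWξ p hp, hnorm₁] at h1
      have ht : t = 0 := by linarith
      apply huW
      rw [← hpq, ht]
      simpa using hp
    obtain ⟨φ, hφu, hφM⟩ := Submodule.exists_dual_map_eq_bot_of_notMem huM inferInstance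
    have hφ0 : ∀ m ∈ M, φ m = 0 := by
      intro m hm
      have : φ m ∈ M.map φ := ⟨m, hm, rfl⟩
      rw [hφM] at this
      simpa using this
    set ζ := fun j => φ ((Pi.single j (1:ℝ) : Fin n → ℝ)) with hζ
    have hdζ : ∀ w : Fin n → ℝ, dotp w ζ = φ w := by
      intro w
      have hwsum : ∑ j, w j • (Pi.single j (1:ℝ) : Fin n → ℝ) = w := by
        ext k
        rw [Finset.sum_apply]
        simp [Pi.single_apply]
      calc dotp w ζ = ∑ j, w j * φ ((Pi.single j (1:ℝ) : Fin n → ℝ)) := rfl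
        _ = φ (∑ j, w j • (Pi.single j (1:ℝ) : Fin n → ℝ)) := by
            rw [map_sum]
            exact (Finset.sum_congr rfl fun j _ => by rw [φ.map_smul, smul_eq_mul]).symm
        _ = φ w := by rw [hwsum]
    have hηk : ∀ k, k ≠ i₁ → k ≠ i₂ → dotp (η k) ζ = 0 := by
      intro k hk1 hk2
      rw [hdζ]
      exact hφ0 _ (Submodule.mem_sup_left (Submodule.subset_span ⟨k, ⟨hk1, hk2⟩, rfl⟩))
    have hη1 : dotp (η i₁) ζ = 0 := by
      rw [hdζ]
      exact hφ0 _ (Submodule.mem_sup_right (Submodule.mem_span_singleton_self _))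
    have hη2 : dotp (η i₂) ζ = φ u := by
      have hsplit : η i₂ = u + c • η i₁ := by rw [hu]; abel
      rw [hsplit, dotp_add_left, dotp_smul_left, hη1, hdζ]
      ring
    set r := φ u with hr
    have hrne : r ≠ 0 := hφu
    set d := (-(r⁻¹)) • ζ with hd
    have hd0 : d = 0 := by
      refine ray_lemma hbound hw₁.1 ?_
      intro j
      rw [hd, dotp_smul_right]
      by_cases hj1 : j = i₁
      · rw [hj1, hη1]
        simp
      · by_cases hj2 : j = i₂
        · rw [hj2, hη2]
          have : -(r⁻¹) * r = -1 := by field_simp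
          rw [this]
          linarith
        · rw [hηk j hj1 hj2]
          simp
    have hcontra : dotp (η i₂) d = 0 := by rw [hd0, dotp_zero_right]
    rw [hd, dotp_smul_right, hη2] at hcontra
    have : -(r⁻¹) * r = -1 := by field_simp
    rw [this] at hcontra
    linarith
  · -- every nonempty face avoiding i₁, i₂ meets both facets
    intro J hJ1 hJ2 hJne
    rcases J.eq_empty_or_nonempty with rfl | ⟨j₀, hj₀⟩
    · have hempty : (⋂ j ∈ (∅ : Finset (Fin N)), facet η κ j) = Set.univ := by simp
      rw [hempty, Set.inter_univ, Set.inter_univ]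
      exact ⟨hne₁, hne₂⟩
    · obtain ⟨x, hx⟩ := hJne
      have hxall : ∀ j ∈ J, x ∈ facet η κ j := by
        intro j hj
        exact Set.mem_iInter₂.mp hx j hj
      have hxp : x ∈ polytope η κ := (hxall j₀ hj₀).1
      constructor
      · set z₁ := x + (κ i₁ - dotp (η i₁) x) • ξ with hz₁
        have hz₁f : z₁ ∈ facet η κ i₁ := prism_mem hne₁ hnorm₁ hperp₁ hxp
        refine ⟨z₁, hz₁f, Set.mem_iInter₂.mpr ?_⟩
        intro j hj
        have hj1 : j ≠ i₁ := fun h => hJ1 (h ▸ hj)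
        have hj2 : j ≠ i₂ := fun h => hJ2 (h ▸ hj)
        refine ⟨hz₁f.1, ?_⟩
        rw [hz₁, dotp_add_smul, (hzero j hj1 hj2).1, (hxall j hj).2]
        ring
      · set z₂ := x + (κ i₂ - dotp (η i₂) x) • ξ₂ with hz₂
        have hz₂f : z₂ ∈ facet η κ i₂ := prism_mem hne₂ hnorm₂ hperp₂ hxp
        refine ⟨z₂, hz₂f, Set.mem_iInter₂.mpr ?_⟩
        intro j hj
        have hj1 : j ≠ i₁ := fun h => hJ1 (h ▸ hj)
        have hj2 : j ≠ i₂ := fun h => hJ2 (h ▸ hj)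
        refine ⟨hz₂f.1, ?_⟩
        rw [hz₂, dotp_add_smul, (hzero j hj1 hj2).2, (hxall j hj).2]
        ring
end
end

section
/- Fix a = (a_1, a_2) ∈ ℝ² and let Y ⊂ ℝ³ be the polytope with conormals η_1 = −e_1, η_2 = −e_2, η_3 = e_1 + e_2, η_4 = −e_3, η_5 = e_3 + a_1 e_1 + a_2 e_2 and support numbers κ_1 = κ_2 = κ_4 = 0, κ_3 = λ > 0, κ_5 = h with h > max(0, a_1, a_2)·λ. Let H = γ_1 η_1 + γ_2 η_2 + γ_3 η_3 with γ_1 + γ_2 + γ_3 = 0. Then ⟨H, c_Y⟩ = λ( γ_3 + λ(γ_1 a_1 + γ_2 a_2) / (12h − 4λ(a_1+a_2)) ); consequently this is an affine-linear function of (λ, h) if and only if γ_1 a_1 + γ_2 a_2 = 0. -/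
/-!
`Y` is the region between `0` and the affine function `h - a₁ x₁ - a₂ x₂` over the triangle
`Δ = {x₁, x₂ ≥ 0, x₁ + x₂ ≤ λ}`, so by Fubini the volume of `Y` and the integrals of `x₁`, `x₂`
over `Y` are combinations of the moments `∫_Δ x₁^i x₂^j = i! j! λ^(i+j+2) / (i+j+2)!`, which
reduce in turn to the beta integrals `∫₀^b x^i (b - x)^k = i! k! b^(i+k+1) / (i+k+1)!`.
This gives the closed form of `⟨H, c_Y⟩`. At `λ = 1` it reads `γ₃ + K / (12 h - 4 (a₁ + a₂))`
with `K = γ₁ a₁ + γ₂ a₂`, which is affine in `h` only if `K = 0`, since its second differences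
are `2K / (t (t + 1) (t + 2))`.
-/

open MeasureTheory

noncomputable section

/-- The polytope `Y_a(0,0,λ,0,h)` of Example 1.1. -/
def Ypoly (a₁ a₂ lam h : ℝ) : Set (Fin 3 → ℝ) :=
  {x | 0 ≤ x 0 ∧ 0 ≤ x 1 ∧ x 0 + x 1 ≤ lam ∧ 0 ≤ x 2 ∧ x 2 + a₁ * x 0 + a₂ * x 1 ≤ h}

/-- `⟨H, c_Y⟩` where `H = γ₁η₁ + γ₂η₂ + γ₃η₃ = (γ₃-γ₁)e₁ + (γ₃-γ₂)e₂`. -/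
def Yval (a₁ a₂ γ₁ γ₂ γ₃ lam h : ℝ) : ℝ :=
  (γ₃ - γ₁) * (⨍ x in Ypoly a₁ a₂ lam h, x) 0 + (γ₃ - γ₂) * (⨍ x in Ypoly a₁ a₂ lam h, x) 1

open Set
open scoped Nat

theorem setIntegral_region_between_cc {α E : Type*} [MeasurableSpace α] {μ : Measure α}
    [SFinite μ] [NormedAddCommGroup E] [NormedSpace ℝ E] {f g : α → ℝ} {s : Set α}
    (hf : Measurable f) (hg : Measurable g) (hs : MeasurableSet s) (hfg : ∀ x ∈ s, f x ≤ g x)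
    {F : α × ℝ → E}
    (hF : IntegrableOn F {p | p.1 ∈ s ∧ p.2 ∈ Icc (f p.1) (g p.1)} (μ.prod volume)) :
    ∫ p in {p : α × ℝ | p.1 ∈ s ∧ p.2 ∈ Icc (f p.1) (g p.1)}, F p ∂(μ.prod volume)
      = ∫ x in s, (∫ z in f x..g x, F (x, z)) ∂μ := by
  have hR := measurableSet_region_between_cc hf hg hs
  rw [← integral_indicator hR, integral_prod _ ((integrable_indicator_iff hR).2 hF),
    ← integral_indicator hs]
  congr 1 with x
  by_cases hx : x ∈ s
  · have hsec : (fun z => indicator {p : α × ℝ | p.1 ∈ s ∧ p.2 ∈ Icc (f p.1) (g p.1)} F (x, z))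
        = indicator (Icc (f x) (g x)) (fun z => F (x, z)) := by
      ext z; simp [indicator, hx]
    rw [hsec, integral_indicator measurableSet_Icc, integral_Icc_eq_integral_Ioc,
      ← intervalIntegral.integral_of_le (hfg x hx), indicator_of_mem hx]
  · simp [hx]

theorem isCompact_region_between_cc {α : Type*} [TopologicalSpace α] [T2Space α] {f g : α → ℝ}
    {s : Set α} (hs : IsCompact s) (hf : Continuous f) (hg : Continuous g) :
    IsCompact {p : α × ℝ | p.1 ∈ s ∧ p.2 ∈ Icc (f p.1) (g p.1)} := by
  obtain ⟨m, hm⟩ := hs.bddBelow_image hf.continuousOn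
  obtain ⟨M, hM⟩ := hs.bddAbove_image hg.continuousOn
  refine (hs.prod (isCompact_Icc (a := m) (b := M))).of_isClosed_subset ?_ ?_
  · exact (hs.isClosed.preimage continuous_fst).inter
      ((isClosed_le (hf.comp continuous_fst) continuous_snd).inter
        (isClosed_le continuous_snd (hg.comp continuous_fst)))
  · rintro ⟨x, z⟩ ⟨hx, hzf, hzg⟩
    exact ⟨hx, (hm ⟨x, hx, rfl⟩).trans hzf, hzg.trans (hM ⟨x, hx, rfl⟩)⟩

theorem integral_pow_mul_sub_pow (b : ℝ) (i k : ℕ) :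
    ∫ x in (0 : ℝ)..b, x ^ i * (b - x) ^ k = i ! * k ! * b ^ (i + k + 1) / (i + k + 1)! := by
  induction k generalizing i with
  | zero => simp [integral_pow, Nat.factorial_succ]; field_simp
  | succ k ih =>
    have hsplit : ∀ x : ℝ, x ^ i * (b - x) ^ (k + 1)
        = b * (x ^ i * (b - x) ^ k) - x ^ (i + 1) * (b - x) ^ k := fun x => by ring
    simp_rw [hsplit]
    rw [intervalIntegral.integral_sub (by apply Continuous.intervalIntegrable; fun_prop)
      (by apply Continuous.intervalIntegrable; fun_prop), intervalIntegral.integral_const_mul,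
      ih, ih, show i + 1 + k + 1 = i + k + 1 + 1 by ring,
      show i + (k + 1) + 1 = i + k + 1 + 1 by ring, Nat.factorial_succ (i + k + 1),
      Nat.factorial_succ i, Nat.factorial_succ k]
    push_cast
    field_simp
    ring

def triangle (l : ℝ) : Set (ℝ × ℝ) :=
  {q | q.1 ∈ Icc 0 l ∧ q.2 ∈ Icc 0 (l - q.1)}

def simplexMoment (l : ℝ) (i j : ℕ) : ℝ :=
  i ! * j ! * l ^ (i + j + 2) / (i + j + 2)!

theorem isCompact_triangle (l : ℝ) : IsCompact (triangle l) :=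
  isCompact_region_between_cc (f := fun _ => 0) (g := fun x => l - x) isCompact_Icc
    continuous_const (by fun_prop)

theorem setIntegral_triangle_monomial {l : ℝ} (hl : 0 ≤ l) (i j : ℕ) :
    ∫ q in triangle l, q.1 ^ i * q.2 ^ j = simplexMoment l i j := by
  have hfubini := setIntegral_region_between_cc (μ := volume) (f := fun _ => 0)
    (g := fun x => l - x) measurable_const (by fun_prop) measurableSet_Icc
    (fun x hx => sub_nonneg.2 hx.2) (F := fun q : ℝ × ℝ => q.1 ^ i * q.2 ^ j)
    ((by fun_prop : Continuous fun q : ℝ × ℝ => q.1 ^ i * q.2 ^ j).continuousOn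
      |>.integrableOn_compact (isCompact_triangle l))
  rw [← Measure.volume_eq_prod] at hfubini
  change ∫ q in triangle l, q.1 ^ i * q.2 ^ j = _ at hfubini
  simp only [intervalIntegral.integral_const_mul, integral_pow] at hfubini
  rw [hfubini, integral_Icc_eq_integral_Ioc, ← intervalIntegral.integral_of_le hl]
  have hint : ∀ x : ℝ, x ^ i * (((l - x) ^ (j + 1) - 0 ^ (j + 1)) / (j + 1))
      = x ^ i * (l - x) ^ (j + 1) / (j + 1) := fun x => by rw [zero_pow (by omega)]; ring
  simp_rw [hint]
  rw [intervalIntegral.integral_div, integral_pow_mul_sub_pow, simplexMoment,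
    show i + (j + 1) + 1 = i + j + 2 by ring, Nat.factorial_succ j]
  push_cast
  field_simp

def finThreeArrowEquiv : (Fin 3 → ℝ) ≃ᵐ (ℝ × ℝ) × ℝ :=
  ((MeasurableEquiv.piFinSuccAbove (fun _ => ℝ) (Fin.last 2)).trans
    ((MeasurableEquiv.refl ℝ).prodCongr MeasurableEquiv.finTwoArrow)).trans
    MeasurableEquiv.prodComm

theorem measurePreserving_finThreeArrowEquiv : MeasurePreserving finThreeArrowEquiv :=
  ((volume_preserving_piFinSuccAbove (fun _ => ℝ) (Fin.last 2)).trans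
    ((MeasurePreserving.id _).prod (volume_preserving_finTwoArrow ℝ))).trans
    Measure.measurePreserving_swap

def ypolyRegion (a₁ a₂ l h : ℝ) : Set ((ℝ × ℝ) × ℝ) :=
  {p | p.1 ∈ triangle l ∧ p.2 ∈ Icc 0 (h - a₁ * p.1.1 - a₂ * p.1.2)}

theorem isCompact_ypolyRegion (a₁ a₂ l h : ℝ) : IsCompact (ypolyRegion a₁ a₂ l h) :=
  isCompact_region_between_cc (isCompact_triangle l) continuous_const
    (by fun_prop : Continuous fun q : ℝ × ℝ => h - a₁ * q.1 - a₂ * q.2)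

theorem ypoly_eq_preimage (a₁ a₂ l h : ℝ) :
    Ypoly a₁ a₂ l h = finThreeArrowEquiv ⁻¹' ypolyRegion a₁ a₂ l h := by
  ext x
  change _ ↔ (x 0, x 1) ∈ triangle l ∧ x 2 ∈ Icc 0 (h - a₁ * x 0 - a₂ * x 1)
  simp only [Ypoly, triangle, mem_ofPred_eq, mem_Icc]
  constructor
  · rintro ⟨h0, h1, h01, h2, h3⟩
    exact ⟨⟨⟨h0, by linarith⟩, ⟨h1, by linarith⟩⟩, h2, by linarith⟩
  · rintro ⟨⟨⟨h0, -⟩, ⟨h1, h01⟩⟩, h2, h3⟩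
    exact ⟨h0, h1, by linarith, h2, by linarith⟩

theorem integrableOn_ypoly (a₁ a₂ l h : ℝ) : IntegrableOn (fun x => x) (Ypoly a₁ a₂ l h) := by
  have hcomp : (fun x : Fin 3 → ℝ => x)
      = (fun p : (ℝ × ℝ) × ℝ => ![p.1.1, p.1.2, p.2]) ∘ finThreeArrowEquiv := by
    ext x i; fin_cases i <;> rfl
  rw [ypoly_eq_preimage, hcomp, measurePreserving_finThreeArrowEquiv.integrableOn_comp_preimage
    finThreeArrowEquiv.measurableEmbedding]
  exact (by fun_prop : Continuous fun p : (ℝ × ℝ) × ℝ => ![p.1.1, p.1.2, p.2]).continuousOn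
    |>.integrableOn_compact (isCompact_ypolyRegion a₁ a₂ l h)

theorem setIntegral_ypoly_monomial {a₁ a₂ l h : ℝ} (hl : 0 ≤ l)
    (hw : ∀ q ∈ triangle l, a₁ * q.1 + a₂ * q.2 ≤ h) (i j : ℕ) :
    ∫ x in Ypoly a₁ a₂ l h, x 0 ^ i * x 1 ^ j
      = h * simplexMoment l i j - a₁ * simplexMoment l (i + 1) j
          - a₂ * simplexMoment l i (j + 1) := by
  have hmono : ∀ m n : ℕ, IntegrableOn (fun q : ℝ × ℝ => q.1 ^ m * q.2 ^ n) (triangle l) :=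
    fun m n => (by fun_prop : Continuous fun q : ℝ × ℝ => q.1 ^ m * q.2 ^ n).continuousOn
      |>.integrableOn_compact (isCompact_triangle l)
  calc ∫ x in Ypoly a₁ a₂ l h, x 0 ^ i * x 1 ^ j
      = ∫ p in ypolyRegion a₁ a₂ l h, p.1.1 ^ i * p.1.2 ^ j := by
        rw [ypoly_eq_preimage]
        exact measurePreserving_finThreeArrowEquiv.setIntegral_preimage_emb
          finThreeArrowEquiv.measurableEmbedding (fun p => p.1.1 ^ i * p.1.2 ^ j) _
    _ = ∫ q in triangle l, (∫ z in (0 : ℝ)..(h - a₁ * q.1 - a₂ * q.2), q.1 ^ i * q.2 ^ j) := by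
        have hfubini := setIntegral_region_between_cc (μ := volume) (f := fun _ => 0)
          (g := fun q : ℝ × ℝ => h - a₁ * q.1 - a₂ * q.2) measurable_const (by fun_prop)
          (isCompact_triangle l).isClosed.measurableSet (fun q hq => by linarith [hw q hq])
          (F := fun p : (ℝ × ℝ) × ℝ => p.1.1 ^ i * p.1.2 ^ j)
          ((by fun_prop : Continuous fun p : (ℝ × ℝ) × ℝ => p.1.1 ^ i * p.1.2 ^ j).continuousOn
            |>.integrableOn_compact (isCompact_ypolyRegion a₁ a₂ l h))
        rwa [← Measure.volume_eq_prod] at hfubini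
    _ = ∫ q in triangle l, (h * (q.1 ^ i * q.2 ^ j) - a₁ * (q.1 ^ (i + 1) * q.2 ^ j)
          - a₂ * (q.1 ^ i * q.2 ^ (j + 1))) := by
        congr 1 with q
        simp only [intervalIntegral.integral_const, smul_eq_mul]
        ring
    _ = _ := by
        rw [integral_sub ?_ ((hmono _ _).const_mul _),
          integral_sub ((hmono _ _).const_mul _) ((hmono _ _).const_mul _),
          integral_const_mul, integral_const_mul, integral_const_mul,
          setIntegral_triangle_monomial hl, setIntegral_triangle_monomial hl,
          setIntegral_triangle_monomial hl]
        exact ((hmono _ _).const_mul _).sub ((hmono _ _).const_mul _)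

theorem mul_add_mul_le_of_mem_triangle {a₁ a₂ l h : ℝ} (hh : max 0 (max a₁ a₂) * l ≤ h)
    {q : ℝ × ℝ} (hq : q ∈ triangle l) : a₁ * q.1 + a₂ * q.2 ≤ h := by
  obtain ⟨⟨hx, -⟩, hy, hxy⟩ := hq
  have ha₁ : a₁ ≤ max 0 (max a₁ a₂) := (le_max_left _ _).trans (le_max_right _ _)
  have ha₂ : a₂ ≤ max 0 (max a₁ a₂) := (le_max_right _ _).trans (le_max_right _ _)
  nlinarith [mul_le_mul_of_nonneg_right ha₁ hx, mul_le_mul_of_nonneg_right ha₂ hy,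
    mul_le_mul_of_nonneg_left (show q.1 + q.2 ≤ l by linarith) (le_max_left 0 (max a₁ a₂))]

theorem yval_eq {a₁ a₂ γ₁ γ₂ γ₃ l h : ℝ} (hγ : γ₁ + γ₂ + γ₃ = 0) (hl : 0 < l)
    (hh : max 0 (max a₁ a₂) * l < h) :
    Yval a₁ a₂ γ₁ γ₂ γ₃ l h
      = l * (γ₃ + l * (γ₁ * a₁ + γ₂ * a₂) / (12 * h - 4 * l * (a₁ + a₂))) := by
  have hw := fun q => mul_add_mul_le_of_mem_triangle (q := q) hh.le
  have hcoord : ∀ i, (⨍ x in Ypoly a₁ a₂ l h, x) i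
      = (∫ x in Ypoly a₁ a₂ l h, x i) / volume.real (Ypoly a₁ a₂ l h) := fun i => by
    rw [setAverage_eq, Pi.smul_apply, eval_integral (integrable_pi_iff.1 (integrableOn_ypoly ..)),
      smul_eq_mul, inv_mul_eq_div]
  have hvol : volume.real (Ypoly a₁ a₂ l h) = h * l ^ 2 / 2 - (a₁ + a₂) * l ^ 3 / 6 := by
    have := setIntegral_ypoly_monomial hl.le hw 0 0
    simp only [pow_zero, mul_one, setIntegral_const, smul_eq_mul] at this
    rw [this]; norm_num [simplexMoment, Nat.factorial]; ring
  have hm₀ : ∫ x in Ypoly a₁ a₂ l h, x 0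
      = h * l ^ 3 / 6 - a₁ * l ^ 4 / 12 - a₂ * l ^ 4 / 24 := by
    have := setIntegral_ypoly_monomial hl.le hw 1 0
    simp only [pow_zero, pow_one, mul_one] at this
    rw [this]; norm_num [simplexMoment, Nat.factorial]; ring
  have hm₁ : ∫ x in Ypoly a₁ a₂ l h, x 1
      = h * l ^ 3 / 6 - a₂ * l ^ 4 / 12 - a₁ * l ^ 4 / 24 := by
    have := setIntegral_ypoly_monomial hl.le hw 0 1
    simp only [pow_zero, pow_one, one_mul] at this
    rw [this]; norm_num [simplexMoment, Nat.factorial]; ring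
  have ha₁ : a₁ ≤ max 0 (max a₁ a₂) := (le_max_left _ _).trans (le_max_right _ _)
  have ha₂ : a₂ ≤ max 0 (max a₁ a₂) := (le_max_right _ _).trans (le_max_right _ _)
  have hM : 0 ≤ max 0 (max a₁ a₂) * l := mul_nonneg (le_max_left _ _) hl.le
  have hD : 0 < 12 * h - 4 * l * (a₁ + a₂) := by
    nlinarith [mul_le_mul_of_nonneg_right ha₁ hl.le, mul_le_mul_of_nonneg_right ha₂ hl.le]
  have hγ₂ : γ₂ = -γ₁ - γ₃ := by linarith
  rw [Yval, hcoord, hcoord, hvol, hm₀, hm₁, hγ₂,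
    show h * l ^ 2 / 2 - (a₁ + a₂) * l ^ 3 / 6 = l ^ 2 * (12 * h - 4 * l * (a₁ + a₂)) / 24 by ring]
  generalize hDdef : 12 * h - 4 * l * (a₁ + a₂) = D at hD ⊢
  obtain rfl : h = (D + 4 * l * (a₁ + a₂)) / 12 := by linarith
  field_simp
  ring

theorem eq_zero_of_div_eq_affine {K A B T : ℝ} (h : ∀ t, T < t → K / t = A * t + B) : K = 0 := by
  set t := |T| + 1
  have ht : 0 < t := by positivity
  have hT : T < t := by linarith [le_abs_self T]
  have h₀ := h t hT
  have h₁ := h (t + 1) (by linarith)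
  have h₂ := h (t + 2) (by linarith)
  have hsecond : K / t - 2 * (K / (t + 1)) + K / (t + 2) = 0 := by
    linear_combination h₀ - 2 * h₁ + h₂
  field_simp at hsecond
  linarith

/-- The value of `H = γ₁η₁+γ₂η₂+γ₃η₃` (with `γ₁+γ₂+γ₃ = 0`) on the centroid of `Y` is
`λ(γ₃ + λ(γ₁a₁+γ₂a₂)/(12h − 4λ(a₁+a₂)))`; consequently it is an affine-linear function of
`(λ,h)` iff `γ₁a₁ + γ₂a₂ = 0`. -/
theorem stmt18 (a₁ a₂ γ₁ γ₂ γ₃ : ℝ) (hγ : γ₁ + γ₂ + γ₃ = 0) :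
    (∀ lam h : ℝ, 0 < lam → max 0 (max a₁ a₂) * lam < h →
      Yval a₁ a₂ γ₁ γ₂ γ₃ lam h
        = lam * (γ₃ + lam * (γ₁ * a₁ + γ₂ * a₂) / (12 * h - 4 * lam * (a₁ + a₂)))) ∧
    ((∃ A B C : ℝ, ∀ lam h : ℝ, 0 < lam → max 0 (max a₁ a₂) * lam < h →
        Yval a₁ a₂ γ₁ γ₂ γ₃ lam h = A * lam + B * h + C) ↔ γ₁ * a₁ + γ₂ * a₂ = 0) := by
  refine ⟨fun lam h hl hh => yval_eq hγ hl hh, ⟨fun ⟨A, B, C, hABC⟩ => ?_, fun hK => ?_⟩⟩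
  · refine eq_zero_of_div_eq_affine (T := 12 * max 0 (max a₁ a₂) - 4 * (a₁ + a₂))
      (A := B / 12) (B := A + B * (a₁ + a₂) / 3 + C - γ₃) fun t ht => ?_
    have hh : max 0 (max a₁ a₂) * 1 < (t + 4 * (a₁ + a₂)) / 12 := by linarith
    have := hABC 1 _ one_pos hh
    rw [yval_eq hγ one_pos hh,
      show 12 * ((t + 4 * (a₁ + a₂)) / 12) - 4 * 1 * (a₁ + a₂) = t by ring] at this
    linear_combination this
  · exact ⟨γ₃, 0, 0, fun lam h hl hh => by rw [yval_eq hγ hl hh, hK]; ring⟩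
end
end

section
/- Let η_1,…,η_N be vectors in an n-dimensional real vector space 𝔱 whose positive span is all of 𝔱 and such that no n of them are linearly dependent. Then, after renumbering, the positive span of η_1,…,η_{n+1} is all of 𝔱. -/
open Finset Submodule

/-- If at most `n` of the `η` are involved with coefficients summing (with `•`) to zero, all
coefficients vanish, given that every `n` of the `η` are linearly independent. -/
lemma stmt19_aux_zero {𝔱 : Type*} [AddCommGroup 𝔱] [Module ℝ 𝔱]
    {N n : ℕ} (η : Fin N → 𝔱)
    (hind : ∀ s : Finset (Fin N), s.card = n →
      LinearIndependent ℝ (fun i : s => η i.1))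
    (hNn : n ≤ N) (s : Finset (Fin N)) (hs : s.card ≤ n) (c : Fin N → ℝ)
    (hsum : ∑ i ∈ s, c i • η i = 0) : ∀ i ∈ s, c i = 0 := by
  obtain ⟨t, hst, -, ht⟩ := Finset.exists_subsuperset_card_eq (s.subset_univ) hs
    (by simpa using hNn)
  have LI := hind t ht
  rw [Fintype.linearIndependent_iff] at LI
  have key := LI (fun i => if (i : Fin N) ∈ s then c i else 0) ?_
  · intro i hi
    simpa [hi] using key ⟨i, hst hi⟩
  · have : ∑ i : t, (if (i : Fin N) ∈ s then c i else 0) • η i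
        = ∑ i ∈ t, (if i ∈ s then c i else 0) • η i :=
      Finset.sum_coe_sort t (fun i => (if i ∈ s then c i else 0) • η i)
    rw [this]
    have : ∑ i ∈ t, (if i ∈ s then c i else 0) • η i
        = ∑ i ∈ s, c i • η i := by
      rw [← Finset.sum_subset hst]
      · exact Finset.sum_congr rfl (fun i hi => by simp [hi])
      · intro i _ hi
        simp [hi]
    rw [this, hsum]

/-- If the positive span of `η₁,…,η_N` is all of the `n`-dimensional space `𝔱` and no `n` of
them are linearly dependent, then (after renumbering) already `n+1` of them positively span
`𝔱`. -/
theorem stmt19 {𝔱 : Type*} [AddCommGroup 𝔱] [Module ℝ 𝔱] [FiniteDimensional ℝ 𝔱]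
    {N n : ℕ} (hn : Module.finrank ℝ 𝔱 = n) (η : Fin N → 𝔱)
    (hspan : ∀ v : 𝔱, ∃ a : Fin N → ℝ, (∀ i, 0 < a i) ∧ ∑ i, a i • η i = v)
    (hind : ∀ s : Finset (Fin N), s.card = n →
      LinearIndependent ℝ (fun i : s => η i.1)) :
    ∃ s : Finset (Fin N), s.card ≤ n + 1 ∧
      ∀ v : 𝔱, ∃ a : Fin N → ℝ, (∀ i ∈ s, 0 < a i) ∧ ∑ i ∈ s, a i • η i = v := by
  rcases le_or_gt N n with hN | hN
  · refine ⟨Finset.univ, le_trans (by simpa using hN) (Nat.le_succ n), fun v => ?_⟩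
    obtain ⟨a, ha, hsum⟩ := hspan v
    exact ⟨a, fun i _ => ha i, hsum⟩
  have hNn : n ≤ N := hN.le
  -- Step 1: by repeated reduction, find `n+1` of the `η` with a positive linear
  -- dependence relation.
  have reduce : ∀ k (T : Finset (Fin N)) (b : Fin N → ℝ), T.card ≤ k →
      n + 1 ≤ T.card → (∀ i ∈ T, 0 < b i) → ∑ i ∈ T, b i • η i = 0 →
      ∃ (T' : Finset (Fin N)) (b' : Fin N → ℝ), T'.card = n + 1 ∧ (∀ i ∈ T', 0 < b' i) ∧ ∑ i ∈ T', b' i • η i = 0 := by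
    intro k
    induction k with
    | zero => intro T b hk hT _ _; omega
    | succ k ih =>
      intro T b hk hT hb hsum
      rcases eq_or_lt_of_le hT with heq | hlt
      · exact ⟨T, b, heq.symm, hb, hsum⟩
      -- `T.card ≥ n+2`; pick `n+1` of the vectors: they are linearly dependent.
      obtain ⟨T₀, hT₀T, hT₀⟩ := Finset.exists_subset_card_eq hT
      have hdep : ¬ LinearIndependent ℝ (fun i : T₀ => η i.1) := by
        intro h
        have := h.fintype_card_le_finrank
        rw [Fintype.card_coe, hT₀, hn] at this
        omega
      rw [Fintype.linearIndependent_iff] at hdep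
      push_neg at hdep
      obtain ⟨g, hg0, j₀, hgj₀⟩ := hdep
      -- extend the dependence coefficients to `Fin N`, and normalize so that some
      -- coefficient is positive
      obtain ⟨c, hcsum, hcout, hcnz, i₁, hi₁T, hi₁pos⟩ :
          ∃ c : Fin N → ℝ, (∑ i ∈ T₀, c i • η i = 0) ∧ (∀ i ∉ T₀, c i = 0) ∧
            (∀ i ∈ T₀, c i ≠ 0) ∧ ∃ i ∈ T₀, 0 < c i := by
        set c₀ : Fin N → ℝ := fun i => if h : i ∈ T₀ then g ⟨i, h⟩ else 0 with hc₀
        have hsum0 : ∑ i ∈ T₀, c₀ i • η i = 0 := by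
          rw [← Finset.sum_coe_sort T₀ (fun i => c₀ i • η i)]
          rw [← hg0]
          exact Finset.sum_congr rfl (fun i _ => by simp [hc₀, i.2])
        have hout : ∀ i ∉ T₀, c₀ i = 0 := fun i hi => by simp [hc₀, hi]
        have hnz : ∀ i ∈ T₀, c₀ i ≠ 0 := by
          by_contra h
          push_neg at h
          obtain ⟨j, hjT₀, hj0⟩ := h
          have herase : ∑ i ∈ T₀.erase j, c₀ i • η i = 0 := by
            have h : c₀ j • η j + ∑ i ∈ T₀.erase j, c₀ i • η i = ∑ i ∈ T₀, c₀ i • η i :=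
              Finset.add_sum_erase T₀ (fun i => c₀ i • η i) hjT₀
            rw [hj0, zero_smul, zero_add] at h
            rw [h, hsum0]
          have hcard : (T₀.erase j).card ≤ n := by
            rw [Finset.card_erase_of_mem hjT₀, hT₀]
            omega
          have hall := stmt19_aux_zero η hind hNn (T₀.erase j) hcard c₀ herase
          have : ∀ i ∈ T₀, c₀ i = 0 := by
            intro i hi
            by_cases hij : i = j
            · rw [hij]; exact hj0
            · exact hall i (Finset.mem_erase.mpr ⟨hij, hi⟩)
          exact hgj₀ (by simpa [hc₀, j₀.2] using this j₀ j₀.2)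
        by_cases hpos : ∃ i ∈ T₀, 0 < c₀ i
        · obtain ⟨i, hi, hip⟩ := hpos
          exact ⟨c₀, hsum0, hout, hnz, i, hi, hip⟩
        · push_neg at hpos
          refine ⟨-c₀, by simpa using hsum0, fun i hi => by simp [hout i hi],
            fun i hi => by simpa using hnz i hi, j₀, j₀.2, ?_⟩
          have h1 := hpos j₀ j₀.2
          have h2 := hnz j₀ j₀.2
          simp only [Pi.neg_apply]
          cases lt_or_eq_of_le h1 with
          | inl h => linarith
          | inr h => exact absurd h h2
      -- subtract the right multiple of `c` from `b`
      set P : Finset (Fin N) := T₀.filter (fun i => 0 < c i) with hP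
      obtain ⟨j, hjP, hjmin⟩ := P.exists_min_image (fun i => b i / c i)
        ⟨i₁, by simp [hP, hi₁T, hi₁pos]⟩
      have hjT₀ : j ∈ T₀ := (Finset.mem_filter.mp hjP).1
      have hjc : 0 < c j := (Finset.mem_filter.mp hjP).2
      have hjT : j ∈ T := hT₀T hjT₀
      set t := b j / c j with htdef
      have ht0 : 0 < t := div_pos (hb j hjT) hjc
      set b' : Fin N → ℝ := fun i => b i - t * c i with hb'
      have hb'nonneg : ∀ i ∈ T, 0 ≤ b' i := by
        intro i hiT
        by_cases hiT₀ : i ∈ T₀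
        · rcases lt_or_ge 0 (c i) with hci | hci
          · have hiP : i ∈ P := Finset.mem_filter.mpr ⟨hiT₀, hci⟩
            have := hjmin i hiP
            have : t * c i ≤ b i := by
              rw [htdef]
              calc b j / c j * c i ≤ b i / c i * c i := by
                    exact mul_le_mul_of_nonneg_right this hci.le
                _ = b i := div_mul_cancel₀ _ hci.ne'
            simp only [hb']; linarith
          · have : t * c i ≤ 0 := mul_nonpos_of_nonneg_of_nonpos ht0.le hci
            have := hb i hiT
            simp only [hb']; linarith
        · have := hcout i hiT₀
          have := hb i hiT
          simp only [hb', hcout i hiT₀]; linarith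
      have hb'j : b' j = 0 := by
        simp only [hb', htdef]
        rw [div_mul_cancel₀ _ hjc.ne']
        ring
      have hcsumT : ∑ i ∈ T, c i • η i = 0 := by
        rw [← Finset.sum_subset hT₀T (fun i _ hi => by rw [hcout i hi, zero_smul])]
        exact hcsum
      have hb'sum : ∑ i ∈ T, b' i • η i = 0 := by
        have : ∀ i, b' i • η i = b i • η i - t • (c i • η i) := by
          intro i
          simp only [hb', sub_smul, mul_smul]
        simp_rw [this]
        rw [Finset.sum_sub_distrib, ← Finset.smul_sum, hcsumT, hsum, smul_zero, sub_zero]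
      set T' : Finset (Fin N) := T.filter (fun i => b' i ≠ 0) with hT'
      have hT'sub : T' ⊆ T.erase j := by
        intro i hi
        rw [Finset.mem_filter] at hi
        refine Finset.mem_erase.mpr ⟨?_, hi.1⟩
        rintro rfl
        exact hi.2 hb'j
      have hT'card : T'.card ≤ k := by
        have h1 := Finset.card_le_card hT'sub
        rw [Finset.card_erase_of_mem hjT] at h1
        omega
      have hb'pos : ∀ i ∈ T', 0 < b' i := by
        intro i hi
        rw [Finset.mem_filter] at hi
        exact lt_of_le_of_ne (hb'nonneg i hi.1) (Ne.symm hi.2)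
      have hT'sum : ∑ i ∈ T', b' i • η i = 0 := by
        rw [← hb'sum]
        apply Finset.sum_subset (Finset.filter_subset _ _)
        intro i hiT hi
        simp only [hT', Finset.mem_filter, not_and, not_not] at hi
        rw [hi hiT, zero_smul]
      have hT'big : n + 1 ≤ T'.card := by
        by_contra h
        push_neg at h
        have hall := stmt19_aux_zero η hind hNn T' (by omega) b' hT'sum
        -- but `T \ T₀` is nonempty and contained in `T'`
        have hTT₀ : (T \ T₀).Nonempty := by
          rw [Finset.sdiff_nonempty]
          intro hsub
          have := Finset.card_le_card hsub
          omega
        obtain ⟨i, hi⟩ := hTT₀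
        rw [Finset.mem_sdiff] at hi
        have hbi : b' i = b i := by simp [hb', hcout i hi.2]
        have hiT' : i ∈ T' := by
          rw [hT', Finset.mem_filter]
          exact ⟨hi.1, by rw [hbi]; exact (hb i hi.1).ne'⟩
        have := hall i hiT'
        rw [hbi] at this
        exact (hb i hi.1).ne' this
      exact ih T' b' hT'card hT'big hb'pos hT'sum
  -- apply the reduction to the relation `∑ aᵢ ηᵢ = 0` coming from `hspan 0`
  obtain ⟨a₀, ha₀, ha₀sum⟩ := hspan 0
  have huniv : n + 1 ≤ (Finset.univ : Finset (Fin N)).card := by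
    simpa using hN
  obtain ⟨T, b, hTcard, hbpos, hbsum⟩ := reduce N Finset.univ a₀ (by simp)
    huniv (fun i _ => ha₀ i) ha₀sum
  -- Step 2: the `n+1` vectors indexed by `T` positively span `𝔱`.
  refine ⟨T, hTcard.le, fun v => ?_⟩
  have hTne : T.Nonempty := Finset.card_pos.mp (by omega)
  obtain ⟨j, hjT⟩ := hTne
  set B : Finset (Fin N) := T.erase j with hB
  have hBcard : B.card = n := by
    rw [hB, Finset.card_erase_of_mem hjT, hTcard]
    omega
  have hBsub : B ⊆ T := Finset.erase_subset _ _
  have LI := hind B hBcard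
  have hsp : span ℝ (Set.range (fun i : B => η i.1)) = ⊤ :=
    LI.span_eq_top_of_card_eq_finrank' (by rw [Fintype.card_coe, hBcard, hn])
  have hv : v ∈ span ℝ (Set.range (fun i : B => η i.1)) := by rw [hsp]; trivial
  rw [mem_span_range_iff_exists_fun] at hv
  obtain ⟨dc, hdc⟩ := hv
  set d : Fin N → ℝ := fun i => if h : i ∈ B then dc ⟨i, h⟩ else 0 with hd
  have hdsum : ∑ i ∈ B, d i • η i = v := by
    rw [← Finset.sum_coe_sort B (fun i => d i • η i), ← hdc]
    exact Finset.sum_congr rfl (fun i _ => by simp [hd, i.2])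
  have hdj : d j = 0 := by simp [hd, hB]
  set t : ℝ := 1 + ∑ i ∈ B, |d i| / b i with htdef
  have hterms : ∀ i ∈ B, 0 ≤ |d i| / b i := fun i hi =>
    div_nonneg (abs_nonneg _) (hbpos i (hBsub hi)).le
  have ht1 : (1 : ℝ) ≤ t := by
    rw [htdef]
    have := Finset.sum_nonneg hterms
    linarith
  have ht0 : 0 < t := lt_of_lt_of_le one_pos ht1
  refine ⟨fun i => d i + t * b i, ?_, ?_⟩
  · intro i hiT
    show 0 < d i + t * b i
    by_cases hij : i = j
    · rw [hij, hdj]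
      have := hbpos j hjT
      nlinarith
    · have hiB : i ∈ B := Finset.mem_erase.mpr ⟨hij, hiT⟩
      have hbi := hbpos i hiT
      have hle : 1 + |d i| / b i ≤ t := by
        rw [htdef]
        have := Finset.single_le_sum hterms hiB
        have := Finset.sum_nonneg hterms
        -- sum minus single term is nonneg
        have h2 : |d i| / b i ≤ ∑ k ∈ B, |d k| / b k := Finset.single_le_sum hterms hiB
        linarith
      have : (1 + |d i| / b i) * b i ≤ t * b i := mul_le_mul_of_nonneg_right hle hbi.le
      rw [add_mul, one_mul, div_mul_cancel₀ _ hbi.ne'] at this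
      have habs : -|d i| ≤ d i := neg_abs_le _
      linarith
  · have hsplit : ∑ i ∈ T, (d i + t * b i) • η i
        = ∑ i ∈ T, d i • η i + t • ∑ i ∈ T, b i • η i := by
      rw [Finset.smul_sum, ← Finset.sum_add_distrib]
      exact Finset.sum_congr rfl (fun i _ => by rw [add_smul, smul_smul])
    rw [hsplit, hbsum, smul_zero, add_zero]
    rw [← Finset.add_sum_erase T (fun i => d i • η i) hjT, hdj, zero_smul, zero_add]
    rw [← hB, hdsum]
end
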